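/- There exists a unique positive real number m̂ satisfying 2Φ(−m̂) = m̂·φ(m̂), and the function x ↦ x²·Φ(−x) on [0, ∞) attains its global maximum exactly at m̂: x²·Φ(−x) ≤ m̂²·Φ(−m̂) for all x ≥ 0, with equality if and only if x = m̂. -/

import Mathlib

open MeasureTheory

noncomputable def Phi (x : ℝ) : ℝ :=
  ∫ t in Set.Iic x, (Real.sqrt (2 * Real.pi))⁻¹ * Real.exp (-t ^ 2 / 2)

noncomputable def phi (x : ℝ) : ℝ :=
  (Real.sqrt (2 * Real.pi))⁻¹ * Real.exp (-x ^ 2 / 2)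

open Set Filter

/-! With `g x = 2 Φ(-x) - x φ(x)` (`stationarityGap`) one has `(x² Φ(-x))' = x g(x)` and
`g'(x) = (x² - 3) φ(x)`. So `g` decreases strictly on `[0, √3]` starting from `g 0 = 2 Φ(0) > 0`,
and it is negative on `[√3, ∞)` by the Mills-ratio bound `x Φ(-x) ≤ φ(x)`, which gives
`g x ≤ (2 - x²) Φ(-x)`. Hence `g` has exactly one positive zero `m̂`, is positive before it and
negative after it, and `x² Φ(-x)` increases strictly on `[0, m̂]` and decreases strictly after. -/

lemma lt_of_hasDerivAt_pos_neg {f f' : ℝ → ℝ} {a m x : ℝ} (hf : ∀ y, HasDerivAt f (f' y) y)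
    (hpos : ∀ y ∈ Ioo a m, 0 < f' y) (hneg : ∀ y, m < y → f' y < 0) (hax : a ≤ x)
    (hxm : x ≠ m) : f x < f m := by
  have hcont : ∀ s, ContinuousOn f s := fun s y _ => (hf y).continuousAt.continuousWithinAt
  rcases hxm.lt_or_gt with hlt | hgt
  · refine strictMonoOn_of_hasDerivWithinAt_pos (convex_Icc x m) (hcont _)
      (fun y _ => (hf y).hasDerivWithinAt) (fun y hy => ?_) ⟨le_rfl, hlt.le⟩ ⟨hlt.le, le_rfl⟩ hlt
    rw [interior_Icc] at hy
    exact hpos y ⟨hax.trans_lt hy.1, hy.2⟩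
  · refine strictAntiOn_of_hasDerivWithinAt_neg (convex_Icc m x) (hcont _)
      (fun y _ => (hf y).hasDerivWithinAt) (fun y hy => ?_) ⟨le_rfl, hgt.le⟩ ⟨hgt.le, le_rfl⟩ hgt
    rw [interior_Icc] at hy
    exact hneg y hy.1

lemma phi_pos (x : ℝ) : 0 < phi x := by
  unfold phi; positivity

lemma phi_neg (x : ℝ) : phi (-x) = phi x := by
  simp [phi]

lemma continuous_phi : Continuous phi := by
  unfold phi; fun_prop

lemma phi_eq_gaussianPDFReal : phi = ProbabilityTheory.gaussianPDFReal 0 1 := by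
  ext x; simp [phi, ProbabilityTheory.gaussianPDFReal]

lemma integrable_phi : Integrable phi :=
  phi_eq_gaussianPDFReal ▸ ProbabilityTheory.integrable_gaussianPDFReal 0 1

lemma hasDerivAt_phi (x : ℝ) : HasDerivAt phi (-x * phi x) x := by
  have h : HasDerivAt (fun t : ℝ => -t ^ 2 / 2) (-x) x := by
    simpa using (((hasDerivAt_pow 2 x).neg).div_const 2).congr_deriv (by ring)
  exact (h.exp.const_mul (Real.sqrt (2 * Real.pi))⁻¹).congr_deriv (by unfold phi; ring)

lemma integrable_neg_mul_phi : Integrable (fun t => -t * phi t) := by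
  refine ((integrable_mul_exp_neg_mul_sq (b := 1 / 2) (by norm_num)).const_mul
    (-(Real.sqrt (2 * Real.pi))⁻¹)).congr (Eventually.of_forall fun t => ?_)
  simp only [phi]; ring_nf

lemma integral_Iic_neg_mul_phi (a : ℝ) : ∫ t in Iic a, -t * phi t = phi a := by
  have hderiv : ∀ t ∈ Iic a, HasDerivAt phi (-t * phi t) t := fun t _ => hasDerivAt_phi t
  have hlim := tendsto_zero_of_hasDerivAt_of_integrableOn_Iic hderiv
    integrable_neg_mul_phi.integrableOn integrable_phi.integrableOn
  simpa using integral_Iic_of_hasDerivAt_of_tendsto' hderiv integrable_neg_mul_phi.integrableOn hlim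

lemma Phi_eq_setIntegral_phi (x : ℝ) : Phi x = ∫ t in Iic x, phi t := rfl

lemma Phi_pos (x : ℝ) : 0 < Phi x := by
  rw [Phi_eq_setIntegral_phi, setIntegral_pos_iff_support_of_nonneg_ae
    (ae_of_all _ fun t => (phi_pos t).le) integrable_phi.integrableOn,
    Function.support_eq_univ fun t => (phi_pos t).ne']
  simp

lemma Phi_sub_Phi (a b : ℝ) : Phi b - Phi a = ∫ t in a..b, phi t :=
  intervalIntegral.integral_Iic_sub_Iic integrable_phi.integrableOn integrable_phi.integrableOn

lemma hasDerivAt_Phi (x : ℝ) : HasDerivAt Phi (phi x) x := by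
  have h := (intervalIntegral.integral_hasDerivAt_right (a := 0) (b := x)
    integrable_phi.intervalIntegrable
    (continuous_phi.stronglyMeasurableAtFilter _ _) continuous_phi.continuousAt).const_add (Phi 0)
  refine h.congr_of_eventuallyEq (Eventually.of_forall fun y => ?_)
  simp [← Phi_sub_Phi 0 y]

lemma hasDerivAt_Phi_neg (x : ℝ) : HasDerivAt (fun y => Phi (-y)) (-phi x) x := by
  simpa [phi_neg, Function.comp_def] using (hasDerivAt_Phi (-x)).comp x (hasDerivAt_neg x)

lemma mul_Phi_neg_le_phi (x : ℝ) : x * Phi (-x) ≤ phi x :=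
  calc x * Phi (-x) = ∫ t in Iic (-x), x * phi t := by
        rw [Phi_eq_setIntegral_phi, integral_const_mul]
    _ ≤ ∫ t in Iic (-x), -t * phi t :=
        setIntegral_mono_on (integrable_phi.const_mul x).integrableOn
          integrable_neg_mul_phi.integrableOn measurableSet_Iic fun t ht =>
            mul_le_mul_of_nonneg_right (by linarith [ht.out]) (phi_pos t).le
    _ = phi x := by rw [integral_Iic_neg_mul_phi, phi_neg]

noncomputable def stationarityGap (x : ℝ) : ℝ := 2 * Phi (-x) - x * phi x

lemma hasDerivAt_stationarityGap (x : ℝ) :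
    HasDerivAt stationarityGap ((x ^ 2 - 3) * phi x) x :=
  (((hasDerivAt_Phi_neg x).const_mul 2).sub ((hasDerivAt_id x).mul (hasDerivAt_phi x))).congr_deriv
    (by simp only [id]; ring)

lemma continuous_stationarityGap : Continuous stationarityGap :=
  continuous_iff_continuousAt.2 fun x => (hasDerivAt_stationarityGap x).continuousAt

lemma strictAntiOn_stationarityGap : StrictAntiOn stationarityGap (Icc 0 √3) := by
  refine strictAntiOn_of_hasDerivWithinAt_neg (convex_Icc 0 √3)
    continuous_stationarityGap.continuousOn
    (fun x _ => (hasDerivAt_stationarityGap x).hasDerivWithinAt) fun x hx => ?_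
  rw [interior_Icc] at hx
  have hx3 : x ^ 2 < 3 := by
    simpa using pow_lt_pow_left₀ hx.2 hx.1.le two_ne_zero
  nlinarith [phi_pos x]

lemma stationarityGap_zero_pos : 0 < stationarityGap 0 := by
  simpa [stationarityGap] using Phi_pos 0

lemma stationarityGap_neg {x : ℝ} (hx : √3 ≤ x) : stationarityGap x < 0 := by
  have hx0 : 0 ≤ x := (Real.sqrt_nonneg 3).trans hx
  have hx3 : 3 ≤ x ^ 2 := by
    simpa using pow_le_pow_left₀ (Real.sqrt_nonneg 3) hx 2
  have hmills : x * (x * Phi (-x)) ≤ x * phi x :=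
    mul_le_mul_of_nonneg_left (mul_Phi_neg_le_phi x) hx0
  rw [stationarityGap]
  nlinarith [Phi_pos (-x)]

lemma exists_stationarityGap_sign_change :
    ∃ m, 0 < m ∧ stationarityGap m = 0 ∧ (∀ x ∈ Ico 0 m, 0 < stationarityGap x) ∧
      ∀ x, m < x → stationarityGap x < 0 := by
  obtain ⟨m, ⟨hm0, hm3⟩, hgm⟩ := intermediate_value_Icc' (Real.sqrt_nonneg 3)
    continuous_stationarityGap.continuousOn
    ⟨(stationarityGap_neg le_rfl).le, stationarityGap_zero_pos.le⟩
  have hm : m ∈ Icc 0 √3 := ⟨hm0, hm3⟩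
  refine ⟨m, hm0.lt_of_ne ?_, hgm, fun x hx => ?_, fun x hx => ?_⟩
  · rintro rfl
    exact stationarityGap_zero_pos.ne' hgm
  · exact hgm ▸ strictAntiOn_stationarityGap ⟨hx.1, hx.2.le.trans hm3⟩ hm hx.2
  · rcases le_or_gt x √3 with hx3 | hx3
    · exact hgm ▸ strictAntiOn_stationarityGap hm ⟨hm0.trans hx.le, hx3⟩ hx
    · exact stationarityGap_neg hx3.le

lemma hasDerivAt_sq_mul_Phi_neg (x : ℝ) :
    HasDerivAt (fun y => y ^ 2 * Phi (-y)) (x * stationarityGap x) x :=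
  ((hasDerivAt_pow 2 x).mul (hasDerivAt_Phi_neg x)).congr_deriv
    (by simp only [stationarityGap]; ring)

/-- There exists a unique positive real number `m̂` with
`2Φ(−m̂) = m̂·φ(m̂)`, and the function `x ↦ x²·Φ(−x)` on `[0, ∞)` attains its global
maximum exactly at `m̂`: `x²·Φ(−x) ≤ m̂²·Φ(−m̂)` for all `x ≥ 0`, with equality iff `x = m̂`. -/
theorem exists_unique_maximizer_sq_Phi_neg :
    ∃ m : ℝ, 0 < m ∧ 2 * Phi (-m) = m * phi m ∧
      (∀ m' : ℝ, 0 < m' → 2 * Phi (-m') = m' * phi m' → m' = m) ∧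
      (∀ x : ℝ, 0 ≤ x → x ^ 2 * Phi (-x) ≤ m ^ 2 * Phi (-m)) ∧
      (∀ x : ℝ, 0 ≤ x → (x ^ 2 * Phi (-x) = m ^ 2 * Phi (-m) ↔ x = m)) := by
  obtain ⟨m, hm, hgm, hpos, hneg⟩ := exists_stationarityGap_sign_change
  have hlt : ∀ x, 0 ≤ x → x ≠ m → x ^ 2 * Phi (-x) < m ^ 2 * Phi (-m) := fun x hx hxm =>
    lt_of_hasDerivAt_pos_neg hasDerivAt_sq_mul_Phi_neg
      (fun y hy => mul_pos hy.1 (hpos y ⟨hy.1.le, hy.2⟩))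
      (fun y hy => mul_neg_of_pos_of_neg (hm.trans hy) (hneg y hy)) hx hxm
  refine ⟨m, hm, sub_eq_zero.1 hgm, fun m' hm' hm'_root => ?_, fun x hx => ?_,
    fun x hx => ⟨fun hx_eq => ?_, fun hxm => hxm ▸ rfl⟩⟩
  · have hg : stationarityGap m' = 0 := sub_eq_zero.2 hm'_root
    by_contra hne
    rcases lt_or_gt_of_ne hne with h | h
    · exact (hpos m' ⟨hm'.le, h⟩).ne' hg
    · exact (hneg m' h).ne hg
  · rcases eq_or_ne x m with rfl | hxm
    · exact le_rfl
    · exact (hlt x hx hxm).le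
  · by_contra hxm
    exact (hlt x hx hxm).ne hx_eq
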